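/- Let a and b be positive integers. The number of free Motzkin paths of type (a+b, −b) that start with a down step D or a flat step F and end with an up step U or a flat step F equals Σ_{i=0}^{a−1} C(a+b−2, ⌊i/2⌋) · C(a+b−1−⌊i/2⌋, a−i−1). -/

import Mathlib

/-- A strict partition, encoded as a strictly decreasing list of positive integers. -/
def IsStrictPartition (l : List ℕ) : Prop :=
  List.Pairwise (· > ·) l ∧ ∀ x ∈ l, 0 < x

/-- The set of bar lengths in the (0-indexed) `i`-th row of a strict partition `l`:
`{λᵢ + λⱼ : i < j ≤ ℓ} ∪ ({1,…,λᵢ} \ {λᵢ − λⱼ : i < j ≤ ℓ})`. -/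
def barLengths (l : List ℕ) (i : ℕ) : Finset ℕ :=
  ((Finset.Ioo i l.length).image fun j => l.getD i 0 + l.getD j 0) ∪
    (Finset.Icc 1 (l.getD i 0) \
      ((Finset.Ioo i l.length).image fun j => l.getD i 0 - l.getD j 0))

/-- `l` is an `s`-bar-core: `s` is not a bar length in any row. -/
def IsBarCore (l : List ℕ) (s : ℕ) : Prop :=
  ∀ i, i < l.length → s ∉ barLengths l i

/-- The shifted hook length of the box in row `i`, column `c` (both 0-indexed, where the
`i`-th row of the shifted Young diagram occupies columns `i, …, λᵢ + i − 1`): the number of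
boxes to its right in row `i` together with itself, plus the number of boxes below it in
column `c`, plus the number of boxes of row `c + 1` if that row exists. -/
def shiftedHook (l : List ℕ) (i c : ℕ) : ℕ :=
  (l.getD i 0 + i - c) +
    ((Finset.Ioc i c).filter fun i' => c < l.getD i' 0 + i').card +
    l.getD (c + 1) 0

/-- `l` is an `s`-CSYD: no shifted hook length of the shifted Young diagram `S(λ)`
is divisible by `s`. -/
def IsCSYD (l : List ℕ) (s : ℕ) : Prop :=
  ∀ i c, i < l.length → i ≤ c → c < l.getD i 0 + i → ¬ s ∣ shiftedHook l i c

/-- The `i`-th part (0-indexed) of the doubled distinct partition `λλ`, read off from the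
Frobenius symbol `(λ₁,…,λ_ℓ ; λ₁−1,…,λ_ℓ−1)`: for `i < ℓ` the part is `λᵢ + i + 1`
(1-indexed: `λᵢ + i`), and for `ℓ ≤ i` the part is determined by the column lengths
`λⱼ + j − 1` (1-indexed). -/
def ddPart (l : List ℕ) (i : ℕ) : ℕ :=
  if i < l.length then l.getD i 0 + i + 1
  else ((Finset.range l.length).filter fun j => i + 1 ≤ l.getD j 0 + j).card

/-- The doubled distinct partition `λλ` of a strict partition `l`, as a list of parts. -/
def doubledDistinct (l : List ℕ) : List ℕ :=
  (List.range (l.getD 0 0)).map (ddPart l)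

/-- Ordinary hook length of the box in row `i`, column `j` (0-indexed) of a partition `m`. -/
def hookLen (m : List ℕ) (i j : ℕ) : ℕ :=
  (m.getD i 0 - j) + ((Finset.Ioo i m.length).filter fun i' => j < m.getD i' 0).card

/-- `m` is an `s`-core: no hook length is divisible by `s`. -/
def IsCore (m : List ℕ) (s : ℕ) : Prop :=
  ∀ i j, i < m.length → j < m.getD i 0 → ¬ s ∣ hookLen m i j

/-- NE lattice paths from `(0,0)` to `(a,b)`, encoded as lists of steps where
`false` is an east step `E = (1,0)` and `true` is a north step `N = (0,1)`. -/
def NEPaths (a b : ℕ) : Set (List Bool) :=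
  {w | w.count false = a ∧ w.count true = b}

/-- A step of a free Motzkin path. -/
inductive MStep : Type
  | U : MStep
  | F : MStep
  | D : MStep
deriving DecidableEq

/-- The height change of a step: `U = (1,1)`, `F = (1,0)`, `D = (1,−1)`. -/
def MStep.ht : MStep → ℤ
  | .U => 1
  | .F => 0
  | .D => -1

/-- Free Motzkin paths of type `(p,q)`: lattice paths from `(0,0)` to `(p,q)` with steps
`U = (1,1)`, `F = (1,0)` and `D = (1,−1)`, encoded as lists of steps. -/
def FreeMotzkin (p : ℕ) (q : ℤ) : Set (List MStep) :=
  {w | w.length = p ∧ (w.map MStep.ht).sum = q}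

/-- `multinom n a b c = n! / (a! · b! · c!)`. -/
def multinom (n a b c : ℕ) : ℕ :=
  n.factorial / (a.factorial * b.factorial * c.factorial)

instance : Fintype MStep :=
  ⟨{MStep.U, MStep.F, MStep.D}, fun x => by cases x <;> decide⟩

def MW : ℕ → Finset (List MStep)
  | 0 => {[]}
  | n + 1 => (Finset.univ ×ˢ MW n).image fun p => p.1 :: p.2

lemma mem_MW {n : ℕ} {w : List MStep} : w ∈ MW n ↔ w.length = n := by
  induction n generalizing w with
  | zero => simp [MW, List.length_eq_zero_iff]
  | succ n ih =>
    simp only [MW, Finset.mem_image, Finset.mem_product, Finset.mem_univ, true_and]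
    constructor
    · rintro ⟨⟨x, t⟩, ht, rfl⟩; simp [ih.mp ht]
    · intro h
      match w with
      | x :: t => exact ⟨(x, t), ih.mpr (by simpa using h), rfl⟩

def NM (m : ℕ) (s : ℤ) : ℕ :=
  ((MW m).filter fun w => (w.map MStep.ht).sum = s).card

lemma NM_zero (s : ℤ) : NM 0 s = if s = 0 then 1 else 0 := by
  unfold NM MW
  by_cases h : s = 0 <;> simp [Finset.filter_singleton, h, eq_comm]

lemma univ_MStep : (Finset.univ : Finset MStep) = {MStep.U, MStep.F, MStep.D} := rfl

lemma NM_succ (m : ℕ) (s : ℤ) :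
    NM (m + 1) s = NM m (s - 1) + NM m s + NM m (s + 1) := by
  have main : NM (m + 1) s
      = NM m (s - MStep.U.ht) + NM m (s - MStep.F.ht) + NM m (s - MStep.D.ht) := by
    have hinj : Function.Injective (fun p : MStep × List MStep => p.1 :: p.2) := by
      rintro ⟨x, t⟩ ⟨y, u⟩ h
      simpa [Prod.ext_iff] using h
    unfold NM
    rw [show MW (m + 1) = (Finset.univ ×ˢ MW m).image fun p => p.1 :: p.2 from rfl]
    rw [Finset.filter_image, Finset.card_image_of_injective _ hinj]
    rw [Finset.card_filter, Finset.sum_product]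
    have key : ∀ (x : MStep), (∑ t ∈ MW m, if ((x :: t).map MStep.ht).sum = s then 1 else 0)
        = ((MW m).filter fun w => (w.map MStep.ht).sum = s - x.ht).card := by
      intro x
      rw [Finset.card_filter]
      apply Finset.sum_congr rfl
      intro t _
      simp only [List.map_cons, List.sum_cons]
      congr 1
      exact propext ⟨fun h => by omega, fun h => by omega⟩
    rw [univ_MStep]
    rw [Finset.sum_insert (by decide), Finset.sum_insert (by decide), Finset.sum_singleton]
    rw [key, key, key]
    omega
  rw [main]
  norm_num [MStep.ht]

def ic (n : ℕ) (z : ℤ) : ℕ := if 0 ≤ z then n.choose z.toNat else 0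

lemma ic_coe (n j : ℕ) : ic n (j : ℤ) = n.choose j := by simp [ic]

lemma ic_pascal (n : ℕ) (z : ℤ) : ic (n + 1) z = ic n z + ic n (z - 1) := by
  unfold ic
  rcases lt_trichotomy z 0 with h | rfl | h
  · rw [if_neg (by omega), if_neg (by omega), if_neg (by omega)]
  · norm_num
  · rw [if_pos (by omega), if_pos (by omega), if_pos (by omega)]
    have h1 : z.toNat = (z - 1).toNat + 1 := by omega
    rw [h1, Nat.choose_succ_succ]
    ring

lemma NM_formula (m : ℕ) (s : ℤ) :
    NM m s = ∑ k ∈ Finset.range (m + 1), m.choose k * ic (m - k) (k + s) := by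
  induction m generalizing s with
  | zero =>
    rw [NM_zero]
    simp only [Finset.range_one, Finset.sum_singleton, Nat.choose_self, Nat.sub_self,
      Nat.cast_zero, zero_add, one_mul]
    unfold ic
    rcases lt_trichotomy s 0 with h | rfl | h
    · rw [if_neg (by omega), if_neg (by omega)]
    · norm_num
    · rw [if_neg (by omega), if_pos (by omega),
        Nat.choose_eq_zero_of_lt (show 0 < s.toNat by omega)]
  | succ m ih =>
    rw [NM_succ, ih, ih, ih]
    have hA : ∑ k ∈ Finset.range (m + 1), m.choose k * ic (m - k) (↑k + (s - 1))
        + ∑ k ∈ Finset.range (m + 1), m.choose k * ic (m - k) (↑k + s)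
        = ∑ k ∈ Finset.range (m + 1), m.choose k * ic (m + 1 - k) (↑k + s) := by
      rw [← Finset.sum_add_distrib]
      apply Finset.sum_congr rfl
      intro k hk
      simp only [Finset.mem_range] at hk
      rw [show m + 1 - k = (m - k) + 1 by omega, ic_pascal,
        show (k : ℤ) + s - 1 = ↑k + (s - 1) by ring]
      ring
    have hB : ∑ k ∈ Finset.range (m + 1), m.choose k * ic (m + 1 - k) (↑k + s)
        = ∑ k ∈ Finset.range m, m.choose (k + 1) * ic (m - k) (↑k + s + 1) + ic (m + 1) s := by
      rw [Finset.sum_range_succ' (fun k => m.choose k * ic (m + 1 - k) (↑k + s))]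
      congr 1
      · apply Finset.sum_congr rfl
        intro k hk
        have e1 : m + 1 - (k + 1) = m - k := by omega
        have e2 : ((k + 1 : ℕ) : ℤ) + s = ↑k + s + 1 := by push_cast; ring
        rw [e1, e2]
      · simp
    have hC : ∑ k ∈ Finset.range (m + 1), m.choose (k + 1) * ic (m - k) (↑k + s + 1)
        = ∑ k ∈ Finset.range m, m.choose (k + 1) * ic (m - k) (↑k + s + 1) := by
      rw [Finset.sum_range_succ, Nat.choose_succ_self]
      simp
    have hD : ∑ k ∈ Finset.range (m + 1), m.choose k * ic (m - k) (↑k + (s + 1))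
        = ∑ k ∈ Finset.range (m + 1), m.choose k * ic (m - k) (↑k + s + 1) := by
      apply Finset.sum_congr rfl
      intro k _
      rw [show (k : ℤ) + (s + 1) = ↑k + s + 1 by ring]
    have hsplit : ∑ k ∈ Finset.range (m + 2), (m + 1).choose k * ic (m + 1 - k) (↑k + s)
        = ic (m + 1) s
          + (∑ k ∈ Finset.range (m + 1), m.choose k * ic (m - k) (↑k + s + 1)
             + ∑ k ∈ Finset.range (m + 1), m.choose (k + 1) * ic (m - k) (↑k + s + 1)) := by
      rw [Finset.sum_range_succ' (fun k => (m + 1).choose k * ic (m + 1 - k) (↑k + s))]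
      rw [add_comm]
      congr 1
      · simp
      · rw [← Finset.sum_add_distrib]
        apply Finset.sum_congr rfl
        intro k hk
        have e1 : m + 1 - (k + 1) = m - k := by omega
        have e2 : ((k + 1 : ℕ) : ℤ) + s = ↑k + s + 1 := by push_cast; ring
        rw [e1, e2, Nat.choose_succ_succ]
        ring
    rw [hsplit, hD, hC]
    omega

def MStep.flip : MStep → MStep
  | .U => .D
  | .F => .F
  | .D => .U

lemma MStep.flip_flip (x : MStep) : x.flip.flip = x := by cases x <;> rfl

lemma MStep.ht_flip (x : MStep) : x.flip.ht = -x.ht := by cases x <;> rfl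

lemma sum_map_flip (w : List MStep) :
    ((w.map MStep.flip).map MStep.ht).sum = -(w.map MStep.ht).sum := by
  induction w with
  | nil => simp
  | cons x t ih =>
    simp only [List.map_cons, List.sum_cons, MStep.ht_flip, ih]
    ring

lemma map_flip_flip (w : List MStep) : (w.map MStep.flip).map MStep.flip = w := by
  induction w with
  | nil => rfl
  | cons x t ih => simp [ih, MStep.flip_flip]

lemma NM_neg (m : ℕ) (s : ℤ) : NM m (-s) = NM m s := by
  unfold NM
  apply Finset.card_bij' (fun w _ => w.map MStep.flip) (fun w _ => w.map MStep.flip)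
  · intro w _
    exact map_flip_flip w
  · intro w _
    exact map_flip_flip w
  · intro w hw
    simp only [Finset.mem_filter, mem_MW] at hw ⊢
    rw [sum_map_flip]
    constructor
    · simp [hw.1]
    · omega
  · intro w hw
    simp only [Finset.mem_filter, mem_MW] at hw ⊢
    rw [sum_map_flip]
    constructor
    · simp [hw.1]
    · omega

def mpairs : Finset (MStep × MStep) := {(.D, .U), (.D, .F), (.F, .U), (.F, .F)}

def FP (m : ℕ) (s : ℤ) (p : MStep × MStep) : Finset (List MStep) :=
  ((MW m).filter fun t => (t.map MStep.ht).sum = s - p.1.ht - p.2.ht).image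
    fun t => p.1 :: (t ++ [p.2])

lemma decomp_eq (m : ℕ) (s : ℤ) :
    ((MW (m + 2)).filter fun w => (w.map MStep.ht).sum = s ∧
        (w.head? = some MStep.D ∨ w.head? = some MStep.F) ∧
        (w.getLast? = some MStep.U ∨ w.getLast? = some MStep.F))
      = mpairs.biUnion (FP m s) := by
  ext w
  simp only [Finset.mem_filter, mem_MW, Finset.mem_biUnion]
  constructor
  · rintro ⟨hlen, hsum, hhead, hlast⟩
    rcases w with _ | ⟨x, u⟩
    · simp at hlen
    have hu : u ≠ [] := by
      intro h; subst h; simp at hlen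
    obtain ⟨t, y, rfl⟩ : ∃ t y, u = t ++ [y] :=
      ⟨u.dropLast, u.getLast hu, (List.dropLast_append_getLast hu).symm⟩
    have hhead' : x = MStep.D ∨ x = MStep.F := by simpa using hhead
    have hgl : (x :: (t ++ [y])).getLast? = some y := by
      rw [← List.cons_append, List.getLast?_concat]
    rw [hgl] at hlast
    have hlast' : y = MStep.U ∨ y = MStep.F := by simpa using hlast
    refine ⟨(x, y), ?_, ?_⟩
    · rcases hhead' with rfl | rfl <;> rcases hlast' with rfl | rfl <;> decide
    · rw [FP, Finset.mem_image]
      refine ⟨t, ?_, rfl⟩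
      simp only [Finset.mem_filter, mem_MW]
      constructor
      · simp only [List.length_cons, List.length_append, List.length_singleton, List.length_nil] at hlen
        omega
      · simp only [List.map_cons, List.map_append, List.sum_cons, List.sum_append,
          List.map_nil, List.sum_nil, List.map_cons, List.sum_cons] at hsum
        omega
  · rintro ⟨p, hp, hw⟩
    rw [FP, Finset.mem_image] at hw
    obtain ⟨t, ht, rfl⟩ := hw
    simp only [Finset.mem_filter, mem_MW] at ht
    have hp' : (p.1 = MStep.D ∨ p.1 = MStep.F) ∧ (p.2 = MStep.U ∨ p.2 = MStep.F) := by
      rw [mpairs] at hp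
      fin_cases hp <;> simp
    refine ⟨?_, ?_, ?_, ?_⟩
    · simp [ht.1]
    · simp only [List.map_cons, List.map_append, List.sum_cons, List.sum_append,
        List.map_nil, List.sum_nil]
      have := ht.2
      omega
    · simp only [List.head?_cons]
      rcases hp'.1 with h | h <;> [left; right] <;> rw [h]
    · rw [← List.cons_append, List.getLast?_concat]
      rcases hp'.2 with h | h <;> [left; right] <;> rw [h]

lemma FP_card (m : ℕ) (s : ℤ) (p : MStep × MStep) :
    (FP m s p).card = NM m (s - p.1.ht - p.2.ht) := by
  rw [FP, Finset.card_image_of_injective]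
  · rfl
  · intro t t' h
    simp only [List.cons.injEq, true_and] at h
    exact List.append_cancel_right h

lemma decomp_card (m : ℕ) (s : ℤ) :
    ((MW (m + 2)).filter fun w => (w.map MStep.ht).sum = s ∧
        (w.head? = some MStep.D ∨ w.head? = some MStep.F) ∧
        (w.getLast? = some MStep.U ∨ w.getLast? = some MStep.F)).card
      = NM m s + NM m (s + 1) + NM m (s - 1) + NM m s := by
  have hdisj : ∀ p ∈ mpairs, ∀ q ∈ mpairs, p ≠ q → Disjoint (FP m s p) (FP m s q) := by
    intro p _ q _ hne
    rw [Finset.disjoint_left]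
    intro w hwp hwq
    rw [FP, Finset.mem_image] at hwp hwq
    obtain ⟨t, _, h1⟩ := hwp
    obtain ⟨t', _, h2⟩ := hwq
    rw [← h1] at h2
    injection h2 with hh htl
    apply hne
    have h5 : some q.2 = some p.2 := by
      rw [← List.getLast?_concat (l := t'), ← List.getLast?_concat (l := t), htl]
    exact Prod.ext hh.symm (Option.some.inj h5).symm
  rw [decomp_eq, Finset.card_biUnion hdisj]
  simp only [mpairs]
  rw [Finset.sum_insert (by decide), Finset.sum_insert (by decide),
    Finset.sum_insert (by decide), Finset.sum_singleton]
  rw [FP_card, FP_card, FP_card, FP_card]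
  have e1 : s - MStep.D.ht - MStep.U.ht = s := by norm_num [MStep.ht]
  have e2 : s - MStep.D.ht - MStep.F.ht = s + 1 := by norm_num [MStep.ht]
  have e3 : s - MStep.F.ht - MStep.U.ht = s - 1 := by norm_num [MStep.ht]
  have e4 : s - MStep.F.ht - MStep.F.ht = s := by norm_num [MStep.ht]
  rw [e1, e2, e3, e4]
  ring

lemma parity_sum (f : ℕ → ℕ) (N : ℕ) : ∀ a, a ≤ 2 * N →
    ∑ i ∈ Finset.range a, f i =
      ∑ k ∈ Finset.range N,
        ((if 2 * k < a then f (2 * k) else 0) + (if 2 * k + 1 < a then f (2 * k + 1) else 0)) := by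
  intro a
  induction a with
  | zero => intro _; simp
  | succ a ih =>
    intro h
    rw [Finset.sum_range_succ, ih (by omega)]
    have hk0 : a / 2 ∈ Finset.range N := by rw [Finset.mem_range]; omega
    rw [← Finset.sum_erase_add (Finset.range N) _ hk0,
      ← Finset.sum_erase_add (Finset.range N) _ hk0]
    have heq : ∑ k ∈ (Finset.range N).erase (a / 2),
          ((if 2 * k < a + 1 then f (2 * k) else 0) + (if 2 * k + 1 < a + 1 then f (2 * k + 1) else 0))
        = ∑ k ∈ (Finset.range N).erase (a / 2),
          ((if 2 * k < a then f (2 * k) else 0) + (if 2 * k + 1 < a then f (2 * k + 1) else 0)) := by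
      apply Finset.sum_congr rfl
      intro k hk
      have hkne : k ≠ a / 2 := (Finset.mem_erase.mp hk).1
      congr 1
      · exact if_congr (by omega) rfl rfl
      · exact if_congr (by omega) rfl rfl
    rw [heq]
    rcases Nat.even_or_odd a with ⟨c, hc⟩ | ⟨c, hc⟩
    · have h1 : 2 * (a / 2) < a + 1 := by omega
      have h2 : ¬2 * (a / 2) < a := by omega
      have h3 : ¬2 * (a / 2) + 1 < a + 1 := by omega
      have h4 : ¬2 * (a / 2) + 1 < a := by omega
      rw [if_pos h1, if_neg h2, if_neg h3, if_neg h4, show 2 * (a / 2) = a by omega]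
      omega
    · have h1 : 2 * (a / 2) < a + 1 := by omega
      have h2 : 2 * (a / 2) < a := by omega
      have h3 : 2 * (a / 2) + 1 < a + 1 := by omega
      have h4 : ¬2 * (a / 2) + 1 < a := by omega
      rw [if_pos h1, if_pos h2, if_pos h3, if_neg h4, show 2 * (a / 2) + 1 = a by omega]
      omega

/-- For positive integers `a` and `b`, the number of free Motzkin paths of
type `(a+b, −b)` that start with a down or flat step and end with an up or flat step equals
`Σ_{i=0}^{a−1} C(a+b−2, ⌊i/2⌋) · C(a+b−1−⌊i/2⌋, a−i−1)`. -/
theorem free_motzkin_count_start_end_up (a b : ℕ) (ha : 0 < a) (hb : 0 < b) :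
    {w : List MStep | w ∈ FreeMotzkin (a + b) (-(b : ℤ)) ∧
        (w.head? = some MStep.D ∨ w.head? = some MStep.F) ∧
        (w.getLast? = some MStep.U ∨ w.getLast? = some MStep.F)}.ncard =
      ∑ i ∈ Finset.range a,
        Nat.choose (a + b - 2) (i / 2) * Nat.choose (a + b - 1 - i / 2) (a - i - 1) := by
  obtain ⟨m, hm⟩ : ∃ m, a + b = m + 2 := ⟨a + b - 2, by omega⟩
  have hset : {w : List MStep | w ∈ FreeMotzkin (a + b) (-(b : ℤ)) ∧
        (w.head? = some MStep.D ∨ w.head? = some MStep.F) ∧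
        (w.getLast? = some MStep.U ∨ w.getLast? = some MStep.F)}
      = ↑((MW (m + 2)).filter fun w => (w.map MStep.ht).sum = -(b : ℤ) ∧
          (w.head? = some MStep.D ∨ w.head? = some MStep.F) ∧
          (w.getLast? = some MStep.U ∨ w.getLast? = some MStep.F)) := by
    ext w
    simp only [Set.mem_setOf_eq, Finset.coe_filter, FreeMotzkin, mem_MW]
    constructor
    · rintro ⟨⟨h1, h2⟩, h3⟩
      exact ⟨by omega, h2, h3⟩
    · rintro ⟨h1, h2, h3⟩
      exact ⟨⟨by omega, h2⟩, h3⟩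
  rw [hset, Set.ncard_coe_finset, decomp_card]
  rw [show (-(b : ℤ) + 1) = -((b : ℤ) - 1) by ring, show (-(b : ℤ) - 1) = -((b : ℤ) + 1) by ring]
  rw [NM_neg, NM_neg, NM_neg]
  rw [NM_formula m ((b : ℤ)), NM_formula m ((b : ℤ) - 1), NM_formula m ((b : ℤ) + 1)]
  rw [← Finset.sum_add_distrib, ← Finset.sum_add_distrib, ← Finset.sum_add_distrib]
  rw [parity_sum _ (m + 1) a (by omega)]
  apply Finset.sum_congr rfl
  intro k hk
  rw [Finset.mem_range] at hk
  have hm2 : m + 1 - k = (m - k) + 1 := by omega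
  have hp1 : ic (m + 1 - k) (↑k + ↑b) = ic (m - k) (↑k + ↑b) + ic (m - k) (↑k + (↑b - 1)) := by
    rw [hm2, ic_pascal, show (k : ℤ) + ↑b - 1 = ↑k + (↑b - 1) by ring]
  have hp2 : ic (m + 1 - k) (↑k + ↑b + 1)
      = ic (m - k) (↑k + (↑b + 1)) + ic (m - k) (↑k + ↑b) := by
    rw [hm2, ic_pascal, show (k : ℤ) + ↑b + 1 - 1 = ↑k + ↑b by ring,
      show (k : ℤ) + ↑b + 1 = ↑k + (↑b + 1) by ring]
  have hic1 : ic (m + 1 - k) (↑k + ↑b) = (m + 1 - k).choose (k + b) := by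
    rw [show (k : ℤ) + ↑b = ((k + b : ℕ) : ℤ) by push_cast; ring, ic_coe]
  have hic2 : ic (m + 1 - k) (↑k + ↑b + 1) = (m + 1 - k).choose (k + b + 1) := by
    rw [show (k : ℤ) + ↑b + 1 = ((k + b + 1 : ℕ) : ℤ) by push_cast; ring, ic_coe]
  have hL : m.choose k * ic (m - k) (↑k + ↑b) + m.choose k * ic (m - k) (↑k + (↑b - 1))
        + m.choose k * ic (m - k) (↑k + (↑b + 1)) + m.choose k * ic (m - k) (↑k + ↑b)
      = m.choose k * (m + 1 - k).choose (k + b) + m.choose k * (m + 1 - k).choose (k + b + 1) := by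
    rw [← hic1, ← hic2, hp1, hp2]
    ring
  rw [hL]
  congr 1
  · by_cases hlt : 2 * k < a
    · rw [if_pos hlt]
      rw [show 2 * k / 2 = k by omega, show a + b - 2 = m by omega,
        show a + b - 1 - k = m + 1 - k by omega]
      congr 1
      rw [show a - 2 * k - 1 = (m + 1 - k) - (k + b) by omega]
      exact (Nat.choose_symm (by omega)).symm
    · rw [if_neg hlt, Nat.choose_eq_zero_of_lt (show m + 1 - k < k + b by omega), mul_zero]
  · by_cases hlt : 2 * k + 1 < a
    · rw [if_pos hlt]
      rw [show (2 * k + 1) / 2 = k by omega, show a + b - 2 = m by omega,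
        show a + b - 1 - k = m + 1 - k by omega]
      congr 1
      rw [show a - (2 * k + 1) - 1 = (m + 1 - k) - (k + b + 1) by omega]
      exact (Nat.choose_symm (by omega)).symm
    · rw [if_neg hlt, Nat.choose_eq_zero_of_lt (show m + 1 - k < k + b + 1 by omega), mul_zero]
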